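/- Let G be a directed weighted graph (possibly with negative weights but no negative-weight cycles), let V' ⊆ V, and suppose event 𝒜': every canonical shortest path in G with at least Γ hops contains vertices of V' spaced at most Γ hops apart (including endpoints when they are in V'). Define a virtual digraph G' on V' with an arc ⟨u',v'⟩ of weight d_G^{(Γ)}(u',v') whenever v' is reachable from u' via a Γ-hop-limited path. Then for all u',v' ∈ V': d_{G'}(u',v') = d_G(u',v'). -/

import Mathlib

namespace Stmt15

variable {V : Type*}

/-- Endpoint of a walk starting at `u` with subsequent vertices given by the list. -/
def last : V → List V → V
  | u, [] => u
  | _, x :: xs => last x xs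

/-- Weight of a directed walk starting at `u` (non-arcs have weight `⊤`). -/
noncomputable def cost (w : V → V → EReal) : V → List V → EReal
  | _, [] => 0
  | u, x :: xs => w u x + cost w x xs

/-- `h`-hop-limited distance from `u` to `v`. -/
noncomputable def hdist (w : V → V → EReal) (h : ℕ) (u v : V) : EReal :=
  ⨅ p ∈ {p : List V | p.length ≤ h ∧ last u p = v}, cost w u p

/-- Shortest-path distance from `u` to `v`. -/
noncomputable def dist (w : V → V → EReal) (u v : V) : EReal :=
  ⨅ h : ℕ, hdist w h u v

/-!
Each arc of `G'` is realised by its canonical `Γ`-hop path in `G`, of the same weight, so a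
walk of `G'` expands to a walk of `G` of equal weight and `d_G ≤ d_{G'}`. Conversely, for every
hop bound `i` the canonical `i`-hop shortest path from `u'` to `v'` is cut at its `V'`-markers
into pieces of at most `Γ` hops; each piece weighs at least the `G'`-arc joining its ends, so
`d_{G'} ≤ d_G^{(i)}` for all `i`.
-/

variable {w w' : V → V → EReal}

lemma last_append (u : V) (p q : List V) : last u (p ++ q) = last (last u p) q := by
  induction p generalizing u with
  | nil => rfl
  | cons x xs ih => exact ih x

lemma cost_append (w : V → V → EReal) (u : V) (p q : List V) :
    cost w u (p ++ q) = cost w u p + cost w (last u p) q := by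
  induction p generalizing u with
  | nil => simp [cost, last]
  | cons x xs ih => simp [cost, last, ih x, add_assoc]

lemma cost_ne_bot (hw : ∀ u v, w u v ≠ ⊥) (u : V) (p : List V) : cost w u p ≠ ⊥ := by
  induction p generalizing u with
  | nil => simp [cost]
  | cons x xs ih => simpa [cost, EReal.add_eq_bot_iff] using ⟨hw u x, ih x⟩

lemma last_take_eq_getD (u : V) (p : List V) {a : ℕ} (ha : a ≤ p.length) :
    last u (p.take a) = (u :: p).getD a u := by
  induction p generalizing u a with
  | nil => simp_all [last]
  | cons x xs ih =>
    cases a with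
    | zero => rfl
    | succ a =>
      have hin : a < (x :: xs).length := by simpa [Nat.lt_succ_iff] using ha
      rw [List.take_succ_cons, last, ih x (by simpa using ha), List.getD_cons_succ,
        List.getD_eq_getElem _ _ hin, List.getD_eq_getElem _ _ hin]

lemma hdist_le_cost (w : V → V → EReal) {h : ℕ} {u v : V} (p : List V) (hlen : p.length ≤ h)
    (hlast : last u p = v) : hdist w h u v ≤ cost w u p :=
  iInf₂_le p ⟨hlen, hlast⟩

lemma dist_le_cost (w : V → V → EReal) {u v : V} (p : List V) (hlast : last u p = v) :
    dist w u v ≤ cost w u p :=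
  (iInf_le _ p.length).trans (hdist_le_cost w p le_rfl hlast)

lemma le_of_mem_of_getLast?_eq {α : Type*} [Preorder α] {R : α → α → Prop}
    (hR : ∀ ⦃a b⦄, R a b → a ≤ b) {l : List α} {n j : α} (hl : l.IsChain R)
    (hn : l.getLast? = some n) (hj : j ∈ l) : j ≤ n := by
  have hsorted : l.Pairwise (· ≤ ·) := List.isChain_iff_pairwise.mp (hl.imp hR)
  rw [List.getLast?_eq_some_getLast (List.ne_nil_of_mem hj), Option.some_inj] at hn
  exact hn ▸ hsorted.rel_getLast hj

lemma exists_walk_cost_eq_of_realized (hw' : ∀ u v, w' u v ≠ ⊥)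
    (hreal : ∀ u v, w' u v ≠ ⊤ → ∃ p, last u p = v ∧ cost w u p = w' u v) (x : V) (q : List V)
    (hq : cost w' x q ≠ ⊤) : ∃ p, last x p = last x q ∧ cost w x p = cost w' x q := by
  induction q generalizing x with
  | nil => exact ⟨[], rfl, rfl⟩
  | cons y ys ih =>
    have harc : w' x y ≠ ⊤ := fun h =>
      hq (by rw [cost, h, EReal.top_add_of_ne_bot (cost_ne_bot hw' y ys)])
    have hrest : cost w' y ys ≠ ⊤ := fun h =>
      hq (by rw [cost, h, EReal.add_top_of_ne_bot (hw' x y)])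
    obtain ⟨p₁, hlast₁, hcost₁⟩ := hreal x y harc
    obtain ⟨p₂, hlast₂, hcost₂⟩ := ih y hrest
    refine ⟨p₁ ++ p₂, ?_, ?_⟩
    · rw [last_append, hlast₁, hlast₂]
      rfl
    · rw [cost_append, hlast₁, hcost₁, hcost₂]
      rfl

lemma dist_le_dist_of_realized (hw : ∀ u v, w u v ≠ ⊥)
    (hreal : ∀ u v, w' u v ≠ ⊤ → ∃ p, last u p = v ∧ cost w u p = w' u v) (u v : V) :
    dist w u v ≤ dist w' u v := by
  have hw' : ∀ u v, w' u v ≠ ⊥ := by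
    intro u v hbot
    obtain ⟨p, -, hp⟩ := hreal u v (hbot ▸ bot_ne_top)
    exact cost_ne_bot hw u p (hp.trans hbot)
  refine le_iInf fun _ => le_iInf₂ fun q hq => ?_
  by_cases htop : cost w' u q = ⊤
  · exact htop ▸ le_top
  obtain ⟨p, hlast, hcost⟩ := exists_walk_cost_eq_of_realized hw' hreal u q htop
  exact hcost ▸ dist_le_cost w p (hlast.trans hq.2)

lemma exists_walk_cost_le_cost_drop {S : Set V} {Γ : ℕ}
    (hw' : ∀ u v, u ∈ S → v ∈ S → w' u v ≤ hdist w Γ u v) (u : V) (p : List V) (a : ℕ)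
    (rest : List ℕ)
    (hch : (a :: rest).IsChain (fun a b => a < b ∧ b - a ≤ Γ))
    (hlast : (a :: rest).getLast? = some p.length)
    (hmem : ∀ j ∈ a :: rest, last u (p.take j) ∈ S) :
    ∃ q, last (last u (p.take a)) q = last u p ∧
      cost w' (last u (p.take a)) q ≤ cost w (last u (p.take a)) (p.drop a) := by
  induction rest generalizing a with
  | nil =>
    obtain rfl : a = p.length := by simpa using hlast
    exact ⟨[], by simp [last], by simp [cost]⟩
  | cons b rest ih =>
    obtain ⟨⟨hab, hgap⟩, hch⟩ := List.isChain_cons_cons.mp hch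
    obtain ⟨q, hq, hcq⟩ := ih b hch (by simpa using hlast)
      (fun j hj => hmem j (List.mem_cons_of_mem a hj))
    set x := last u (p.take a)
    set y := last u (p.take b)
    set seg := (p.drop a).take (b - a)
    have htake : p.take b = p.take a ++ seg := by
      rw [← List.take_add, Nat.add_sub_cancel' hab.le]
    have hdrop : p.drop a = seg ++ p.drop b := by
      rw [← List.take_append_drop (b - a) (p.drop a), List.drop_drop, Nat.add_sub_cancel' hab.le]
    have hseg : last x seg = y := by rw [← last_append, ← htake]
    have harc : w' x y ≤ cost w x seg :=
      (hw' x y (hmem a List.mem_cons_self) (hmem b (by simp))).trans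
        (hdist_le_cost w seg ((List.length_take_le _ _).trans hgap) hseg)
    refine ⟨y :: q, hq, ?_⟩
    calc cost w' x (y :: q) = w' x y + cost w' y q := rfl
      _ ≤ cost w x seg + cost w y (p.drop b) := add_le_add harc hcq
      _ = cost w x (p.drop a) := by rw [hdrop, cost_append, hseg]

lemma exists_walk_cost_le_of_markers {S : Set V} {Γ : ℕ}
    (hw' : ∀ u v, u ∈ S → v ∈ S → w' u v ≤ hdist w Γ u v) (u : V) (p : List V) {js : List ℕ}
    (hch : js.IsChain (fun a b => a < b ∧ b - a ≤ Γ)) (hhead : js.head? = some 0)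
    (hlast : js.getLast? = some p.length) (hmem : ∀ j ∈ js, (u :: p).getD j u ∈ S) :
    ∃ q, last u q = last u p ∧ cost w' u q ≤ cost w u p := by
  obtain ⟨rest, rfl⟩ : ∃ rest, js = 0 :: rest := by
    cases js with
    | nil => simp at hhead
    | cons a rest => exact ⟨rest, by simpa using hhead⟩
  have hle (j : ℕ) (hj : j ∈ 0 :: rest) : j ≤ p.length :=
    le_of_mem_of_getLast?_eq (fun _ _ h => h.1.le) hch hlast hj
  simpa [last] using exists_walk_cost_le_cost_drop hw' u p 0 rest hch hlast
    (fun j hj => last_take_eq_getD u p (hle j hj) ▸ hmem j hj)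

theorem virtual_digraph_distances_general [DecidableEq V]
    (w : V → V → EReal) (hnb : ∀ u v, w u v ≠ ⊥)
    (V' : Finset V) (Γ : ℕ)
    (P : ℕ → V → V → List V)
    (hP : ∀ i u v, hdist w i u v ≠ ⊤ → (P i u v).length ≤ i ∧ last u (P i u v) = v ∧
      cost w u (P i u v) = hdist w i u v)
    (hA : ∀ i (u v : V), u ∈ V' → v ∈ V' → hdist w i u v ≠ ⊤ →
      ∃ js : List ℕ, js.Chain' (fun a b => a < b ∧ b - a ≤ Γ) ∧
        js.head? = some 0 ∧ js.getLast? = some (P i u v).length ∧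
        ∀ j ∈ js, ((u :: P i u v).getD j u) ∈ V')
    (w' : V → V → EReal)
    (hw' : ∀ u v, w' u v = if u ∈ V' ∧ v ∈ V' then hdist w Γ u v else ⊤) :
    ∀ u' ∈ V', ∀ v' ∈ V', dist w' u' v' = dist w u' v' := by
  intro u' hu' v' hv'
  have hw'le (u v : V) (hu : u ∈ (V' : Set V)) (hv : v ∈ (V' : Set V)) :
      w' u v ≤ hdist w Γ u v := by
    rw [hw', if_pos ⟨hu, hv⟩]
  have hreal (u v : V) (h : w' u v ≠ ⊤) : ∃ p, last u p = v ∧ cost w u p = w' u v := by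
    rw [hw'] at h ⊢
    split_ifs at h ⊢
    · obtain ⟨-, hlast, hcost⟩ := hP Γ u v h
      exact ⟨P Γ u v, hlast, hcost⟩
    · exact absurd rfl h
  refine le_antisymm (le_iInf fun i => ?_) (dist_le_dist_of_realized hnb hreal u' v')
  by_cases htop : hdist w i u' v' = ⊤
  · exact htop ▸ le_top
  obtain ⟨-, hlast, hcost⟩ := hP i u' v' htop
  obtain ⟨js, hch, hhead, hjs_last, hmem⟩ := hA i u' v' hu' hv' htop
  obtain ⟨q, hq, hcq⟩ := exists_walk_cost_le_of_markers hw'le u' _ hch hhead hjs_last hmem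
  calc dist w' u' v' ≤ cost w' u' q := dist_le_cost w' q (hq.trans hlast)
    _ ≤ cost w u' (P i u' v') := hcq
    _ = hdist w i u' v' := hcost

/-- In a directed weighted graph (possibly with negative weights but no
negative-weight cycles), if every canonical hop-limited shortest path between
sampled vertices has sampled vertices spaced at most `Γ` hops apart, then distances
in the virtual digraph `G'` on the sampled set (whose arcs are weighted by
`Γ`-hop-limited distances in `G`) coincide with distances in `G`. -/
theorem virtual_digraph_distances [Fintype V] [DecidableEq V]
    (w : V → V → EReal) (hnb : ∀ u v, w u v ≠ ⊥)
    (hnocycle : ∀ (v : V) (p : List V), p ≠ [] → last v p = v → 0 ≤ cost w v p)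
    (V' : Finset V) (Γ : ℕ) (hΓ : 1 ≤ Γ)
    (P : ℕ → V → V → List V)
    (hP : ∀ i u v, hdist w i u v ≠ ⊤ → (P i u v).length ≤ i ∧ last u (P i u v) = v ∧
      cost w u (P i u v) = hdist w i u v)
    (hA : ∀ i (u v : V), u ∈ V' → v ∈ V' → hdist w i u v ≠ ⊤ →
      ∃ js : List ℕ, js.Chain' (fun a b => a < b ∧ b - a ≤ Γ) ∧
        js.head? = some 0 ∧ js.getLast? = some (P i u v).length ∧
        ∀ j ∈ js, ((u :: P i u v).getD j u) ∈ V')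
    (w' : V → V → EReal)
    (hw' : ∀ u v, w' u v = if u ∈ V' ∧ v ∈ V' then hdist w Γ u v else ⊤) :
    ∀ u' ∈ V', ∀ v' ∈ V', dist w' u' v' = dist w u' v' :=
  virtual_digraph_distances_general w hnb V' Γ P hP hA w' hw'

end Stmt15
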